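/- arXiv:1110.4542 — 2 statements merged into one kernel-verified Lean document; each statement's English description precedes it below -/
import Mathlib

section
/- Let (F, G, ∂) be a quasi-abelian crossed module of groups. Then the inclusion Z(G) ↪ G induces a group isomorphism Z(G)/∂(Z(F)) ≅ G/∂(F); that is, the cokernel of the restricted homomorphism ∂_Z : Z(F) → Z(G) is isomorphic, via the map induced by the inclusion Z(G) ↪ G, to the cokernel of ∂. (Here ∂(F) is a normal subgroup of G and ∂(Z(F)) is a subgroup of Z(G), so both quotients are groups.) -/
open Subgroup

theorem QuotientGroup.exists_mulEquiv_quotient_subgroupOf_of_forall_eq_mul {G : Type*} [Group G]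
    (H N : Subgroup G) [N.Normal] (hG : ∀ g : G, ∃ n ∈ N, ∃ h ∈ H, g = n * h) :
    ∃ e : H ⧸ N.subgroupOf H ≃* G ⧸ N, ∀ h : H, e h = (h : G) := by
  set φ : H →* G ⧸ N := (QuotientGroup.mk' N).comp H.subtype
  have hker : N.subgroupOf H = φ.ker := by
    ext h
    simp [φ, mem_subgroupOf]
  have hsurj : Function.Surjective φ := by
    rintro ⟨g⟩
    obtain ⟨n, hn, h, hh, rfl⟩ := hG g
    refine ⟨⟨h, hh⟩, QuotientGroup.eq.mpr ?_⟩
    simpa [mul_assoc] using ‹N.Normal›.conj_mem' n hn h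
  exact ⟨(QuotientGroup.quotientMulEquivOfEq hker).trans
    (QuotientGroup.quotientKerEquivOfSurjective φ hsurj), fun _ => rfl⟩

theorem MonoidHom.map_center_subgroupOf_center_eq {F G : Type*} [Group F] [Group G] (d : F →* G)
    (hcenter : ∀ x : G, x ∈ d.range → (∀ y ∈ d.range, Commute x y) →
      ∃ f ∈ center F, d f = x) :
    ((center F).map d).subgroupOf (center G) = d.range.subgroupOf (center G) := by
  refine le_antisymm (subgroupOf_mono _ (map_le_range d _)) fun z hz => ?_
  obtain ⟨f, hf, hdf⟩ :=
    hcenter z (mem_subgroupOf.mp hz) fun y _ => (mem_center_iff.mp z.2 y).symm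
  exact mem_subgroupOf.mpr ⟨f, hf, hdf⟩

/-- Let `(F, G, ∂)` be a quasi-abelian crossed module of groups:
(i) the center of `G` acts trivially on `F`; (ii) `G = ∂(F) · Z(G)`; (iii) every element
of the center of the subgroup `∂(F)` is the image under `∂` of an element of `Z(F)`.
Then the inclusion `Z(G) ↪ G` induces a group isomorphism
`Z(G) ⧸ ∂(Z(F)) ≃* G ⧸ ∂(F)`, i.e. the cokernel of the restricted map
`∂_Z : Z(F) → Z(G)` is isomorphic, via the map induced by the inclusion `Z(G) ↪ G`,
to the cokernel of `∂`.  (Here `∂(Z(F))` is regarded as a subgroup of `Z(G)` by taking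
the preimage under the inclusion `Z(G) ↪ G` of the image `∂(Z(F)) ⊆ Z(G)`; `∂(F)` is
normal in `G`, and subgroups of the commutative group `Z(G)` are normal, so both
quotients are groups.) -/
theorem quasiAbelian_coker_center_mulEquiv_coker {F G : Type*} [Group F] [Group G]
    [MulDistribMulAction G F] (d : F →* G)
    (hpeiffer1 : ∀ (g : G) (f : F), d (g • f) = g * d f * g⁻¹)
    (hqa2 : ∀ g : G, ∃ f : F, ∃ z ∈ Subgroup.center G, g = d f * z)
    (hqa3 : ∀ x : G, x ∈ d.range → (∀ y ∈ d.range, Commute x y) →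
      ∃ f ∈ Subgroup.center F, d f = x) :
    haveI : d.range.Normal :=
      ⟨fun n hn g => by obtain ⟨f, rfl⟩ := hn; exact ⟨g • f, hpeiffer1 g f⟩⟩
    ∃ e : (Subgroup.center G ⧸
        Subgroup.comap (Subgroup.center G).subtype ((Subgroup.center F).map d)) ≃*
          G ⧸ d.range,
      ∀ z : Subgroup.center G, e (QuotientGroup.mk z) = QuotientGroup.mk (z : G) := by
  have : d.range.Normal :=
    ⟨fun n hn g => by obtain ⟨f, rfl⟩ := hn; exact ⟨g • f, hpeiffer1 g f⟩⟩
  obtain ⟨e, he⟩ := QuotientGroup.exists_mulEquiv_quotient_subgroupOf_of_forall_eq_mul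
    (center G) d.range fun g => by
      obtain ⟨f, z, hz, rfl⟩ := hqa2 g
      exact ⟨d f, ⟨f, rfl⟩, z, hz, rfl⟩
  exact ⟨(QuotientGroup.quotientMulEquivOfEq (d.map_center_subgroupOf_center_eq hqa3)).trans e,
    fun z => he z⟩
end

section
/- Let (F, G, ∂) be a quasi-abelian crossed module of groups. Then the homomorphism F → ∂(F)/Z(∂(F)) induced by ∂ (where Z(∂(F)), the center of the subgroup ∂(F), is normal in ∂(F)) is surjective with kernel equal to Z(F); consequently ∂ induces a group isomorphism F/Z(F) ≅ ∂(F)/Z(∂(F)). -/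
/-!
An element `f` lies in the kernel exactly when `∂ f` is central in `∂(F)`. The Peiffer
identity makes `ker ∂` central in `F`, and by (iii) `∂ f = ∂ f₀` for some central `f₀`,
so `f = f₀ · (f₀⁻¹ f)` is a product of central elements.
-/

open Subgroup

theorem MonoidHom.ker_le_center_of_smul_eq_conj {F G : Type*} [Group F] [Monoid G]
    [MulAction G F] (d : F →* G) (hpeiffer : ∀ f f' : F, d f • f' = f * f' * f⁻¹) :
    d.ker ≤ center F := by
  intro k hk
  rw [mem_center_iff]
  intro f
  have hconj : k * f * k⁻¹ = f := by rw [← hpeiffer, d.mem_ker.mp hk, one_smul]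
  calc f * k = k * f * k⁻¹ * k := by rw [hconj]
    _ = k * f := by group

theorem Subgroup.map_center_le_center_of_surjective {F H : Type*} [Group F] [Group H]
    {φ : F →* H} (hφ : Function.Surjective φ) : (center F).map φ ≤ center H := by
  rintro _ ⟨f, hf, rfl⟩
  rw [mem_center_iff]
  intro y
  obtain ⟨f', rfl⟩ := hφ y
  rw [← map_mul, ← map_mul, mem_center_iff.mp hf]

theorem Subgroup.comap_center_eq_center_of_ker_le {F H : Type*} [Group F] [Group H]
    {φ : F →* H} (hφ : Function.Surjective φ) (hker : φ.ker ≤ center F)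
    (hlift : ∀ x ∈ center H, ∃ f ∈ center F, φ f = x) :
    (center H).comap φ = center F := by
  refine le_antisymm (fun f hf => ?_)
    (map_le_iff_le_comap.mp (map_center_le_center_of_surjective hφ))
  obtain ⟨f₀, hf₀, hφf₀⟩ := hlift (φ f) hf
  have hquot : f₀⁻¹ * f ∈ φ.ker := by
    rw [φ.mem_ker, map_mul, map_inv, hφf₀, inv_mul_cancel]
  simpa using mul_mem hf₀ (hker hquot)

theorem quasiAbelian_inn_mulEquiv_inn_range_general {F G : Type*} [Group F] [Group G]
    [MulDistribMulAction G F] (d : F →* G)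
    (hpeiffer2 : ∀ f f' : F, d f • f' = f * f' * f⁻¹)
    (hqa3 : ∀ x : G, x ∈ d.range → (∀ y ∈ d.range, Commute x y) →
      ∃ f ∈ Subgroup.center F, d f = x) :
    Function.Surjective
      ((QuotientGroup.mk' (Subgroup.center d.range)).comp d.rangeRestrict) ∧
    ((QuotientGroup.mk' (Subgroup.center d.range)).comp d.rangeRestrict).ker =
      Subgroup.center F ∧
    ∃ e : (F ⧸ Subgroup.center F) ≃* (d.range ⧸ Subgroup.center d.range),
      ∀ f : F, e (QuotientGroup.mk f) =
        ((QuotientGroup.mk' (Subgroup.center d.range)).comp d.rangeRestrict) f := by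
  have hsurj : Function.Surjective
      ((QuotientGroup.mk' (center d.range)).comp d.rangeRestrict) :=
    (QuotientGroup.mk'_surjective _).comp d.rangeRestrict_surjective
  have hlift : ∀ x ∈ center d.range, ∃ f ∈ center F, d.rangeRestrict f = x := by
    rintro ⟨y, hy⟩ hcent
    obtain ⟨f, hf, rfl⟩ := hqa3 y hy fun y' hy' =>
      congrArg Subtype.val (mem_center_iff.mp hcent ⟨y', hy'⟩) |>.symm
    exact ⟨f, hf, rfl⟩
  have hker : ((QuotientGroup.mk' (center d.range)).comp d.rangeRestrict).ker = center F := by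
    rw [← MonoidHom.comap_ker, QuotientGroup.ker_mk']
    refine comap_center_eq_center_of_ker_le d.rangeRestrict_surjective ?_ hlift
    rw [MonoidHom.ker_rangeRestrict]
    exact d.ker_le_center_of_smul_eq_conj hpeiffer2
  exact ⟨hsurj, hker, (QuotientGroup.quotientMulEquivOfEq hker.symm).trans
    (QuotientGroup.quotientKerEquivOfSurjective _ hsurj), fun _ => rfl⟩

/-- Let `(F, G, ∂)` be a quasi-abelian crossed module of groups:
(i) the center of `G` acts trivially on `F`; (ii) `G = ∂(F) · Z(G)`; (iii) every element
of the center of the subgroup `∂(F)` is the image under `∂` of an element of `Z(F)`.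
Then the homomorphism `F → ∂(F) ⧸ Z(∂(F))` induced by `∂` (the center `Z(∂(F))` of the
subgroup `∂(F)` being normal in `∂(F)`) is surjective with kernel equal to `Z(F)`;
consequently `∂` induces a group isomorphism `F ⧸ Z(F) ≃* ∂(F) ⧸ Z(∂(F))`. -/
theorem quasiAbelian_inn_mulEquiv_inn_range {F G : Type*} [Group F] [Group G]
    [MulDistribMulAction G F] (d : F →* G)
    (hpeiffer1 : ∀ (g : G) (f : F), d (g • f) = g * d f * g⁻¹)
    (hpeiffer2 : ∀ f f' : F, d f • f' = f * f' * f⁻¹)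
    (hqa1 : ∀ z ∈ Subgroup.center G, ∀ f : F, z • f = f)
    (hqa2 : ∀ g : G, ∃ f : F, ∃ z ∈ Subgroup.center G, g = d f * z)
    (hqa3 : ∀ x : G, x ∈ d.range → (∀ y ∈ d.range, Commute x y) →
      ∃ f ∈ Subgroup.center F, d f = x) :
    Function.Surjective
      ((QuotientGroup.mk' (Subgroup.center d.range)).comp d.rangeRestrict) ∧
    ((QuotientGroup.mk' (Subgroup.center d.range)).comp d.rangeRestrict).ker =
      Subgroup.center F ∧
    ∃ e : (F ⧸ Subgroup.center F) ≃* (d.range ⧸ Subgroup.center d.range),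
      ∀ f : F, e (QuotientGroup.mk f) =
        ((QuotientGroup.mk' (Subgroup.center d.range)).comp d.rangeRestrict) f :=
  quasiAbelian_inn_mulEquiv_inn_range_general d hpeiffer2 hqa3
end
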